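/- arXiv:0708.1558 — 2 statements merged into one kernel-verified Lean document; each statement's English description precedes it below -/
import Mathlib

section
/- The code C constructed from Hermitian forms F_λ, λ ∈ Λ, evaluated on Ω = GF(q^2) × S, is a q-ary linear [N, 3, N−2] MDS code: it is a 3-dimensional GF(q)-subspace of GF(q)^N with minimum distance N−2 = N − dim(C) + 1. -/
/-!
Write `σ z = z ^ q` and `Tr z = σ z + z`. Then `F_λ(x, y) = N(x) + Tr(y) + Tr(λ x)`, and since
`Tr` maps `GF(q^2)` onto `GF(q)` and `S` meets every fibre of `Tr`, the code is the image of the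
`GF(q)`-linear map `(x, a) ↦ (Tr(λ x) + a)_λ` on `GF(q^2) × GF(q)`, of dimension `2 + 1`.
If a word with `x ≠ 0` vanished at three points `λ₁, λ₂, λ₃`, then `u = (λ₁ - λ₂) x` and
`v = (λ₃ - λ₂) x` would both satisfy `σ w = -w`, so `u / v = (λ₁ - λ₂) / (λ₃ - λ₂)` would be fixed
by `σ`, i.e. a `(q - 1)`-th root of unity, which the hypothesis on `Λ` forbids. Hence every
nonzero word has at most two zeros, and a nonzero trace-zero `t` gives a word, with
`x = t / (λ₁ - λ₂)`, vanishing at exactly `λ₁` and `λ₂`.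
-/

set_option synthInstance.maxHeartbeats 400000

/-- The Hermitian form `F_λ(x,y) = x^(q+1) + y^q + y + λ^q x^q + λ x`. -/
def Fl (q : ℕ) {F : Type*} [Field F] (l x y : F) : F :=
  x ^ (q + 1) + y ^ q + y + l ^ q * x ^ q + l * x

open Finset Polynomial

theorem exists_ringHom_eq_pow {F : Type*} [Field F] [Fintype F] {q k : ℕ} (hq : IsPrimePow q)
    (hF : Fintype.card F = q ^ k) : ∃ σ : F →+* F, ∀ z, σ z = z ^ q := by
  obtain ⟨p, n, hp, -, rfl⟩ := hq
  rw [← Nat.prime_iff] at hp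
  obtain ⟨m, hr, hcard⟩ := FiniteField.card F (ringChar F)
  have hpr : ringChar F = p := by
    have : ringChar F ∣ p ^ (n * k) := by
      rw [pow_mul, ← hF, hcard]
      exact dvd_pow_self _ m.ne_zero
    exact (Nat.prime_dvd_prime_iff_eq hr hp).1 (hr.dvd_of_dvd_pow this)
  have : CharP F p := hpr ▸ ringChar.charP F
  have : Fact p.Prime := ⟨hp⟩
  exact ⟨iterateFrobenius F p n, iterateFrobenius_def p n⟩

theorem ncard_le_of_forall_pow_add_mul_eq_zero {F : Type*} [Field F] [Finite F] {q : ℕ}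
    (hq : 2 ≤ q) (c : F) {s : Set F} (h : ∀ z ∈ s, z ^ q + c * z = 0) : s.ncard ≤ q := by
  obtain ⟨t, rfl⟩ := s.toFinite.exists_finset_coe
  have hdeg : (C c * X : F[X]).degree < q :=
    (degree_C_mul_X_le c).trans_lt (by exact_mod_cast hq)
  have hmonic := monic_X_pow_add hdeg
  rw [Set.ncard_coe_finset]
  calc #t ≤ (X ^ q + C c * X : F[X]).natDegree :=
        card_le_degree_of_subset_roots fun z hz => by
          rw [mem_roots hmonic.ne_zero]
          simpa using h z hz
    _ = q := by
      rw [natDegree_add_eq_left_of_degree_lt (by rwa [degree_X_pow]), natDegree_X_pow]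

theorem pow_pred_eq_one_of_pow_eq_self {M₀ : Type*} [MonoidWithZero M₀] [IsRightCancelMulZero M₀]
    {r : M₀} {q : ℕ} (hq : q ≠ 0) (hr : r ≠ 0) (h : r ^ q = r) : r ^ (q - 1) = 1 :=
  mul_right_cancel₀ hr <| by
    rw [← pow_succ, Nat.sub_add_cancel (Nat.one_le_iff_ne_zero.2 hq), h, one_mul]

theorem hammingNorm_add_card_filter_eq_zero {ι β : Type*} [Fintype ι] [Zero β] [DecidableEq β]
    (c : ι → β) : hammingNorm c + #{i | c i = 0} = Fintype.card ι := by
  rw [add_comm, ← card_univ, hammingNorm]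
  simp only [ne_eq]
  exact card_filter_add_card_filter_not _

section Trace

variable {F : Type*} [Field F] (σ : F →+* F)

def traceAddHom : F →+ F := σ.toAddMonoidHom + AddMonoidHom.id F

@[simp] theorem traceAddHom_apply (z : F) : traceAddHom σ z = σ z + z := rfl

variable {σ}

theorem map_traceAddHom (hσ : ∀ z, σ (σ z) = z) (z : F) :
    σ (traceAddHom σ z) = traceAddHom σ z := by
  simp [hσ, add_comm]

theorem traceAddHom_mul_of_map_eq {k : F} (hk : σ k = k) (z : F) :
    traceAddHom σ (k * z) = k * traceAddHom σ z := by
  simp [hk, mul_add]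

theorem map_div_sub_eq_of_traceAddHom_mul_eq {x l₁ l₂ l₃ : F} (hx : x ≠ 0)
    (h₁ : traceAddHom σ (l₁ * x) = traceAddHom σ (l₂ * x))
    (h₃ : traceAddHom σ (l₃ * x) = traceAddHom σ (l₂ * x)) :
    σ ((l₁ - l₂) / (l₃ - l₂)) = (l₁ - l₂) / (l₃ - l₂) := by
  have hneg : ∀ l, traceAddHom σ (l * x) = traceAddHom σ (l₂ * x) →
      σ ((l - l₂) * x) = -((l - l₂) * x) := fun l hl => by
    rw [eq_neg_iff_add_eq_zero, ← traceAddHom_apply, sub_mul, map_sub, hl, sub_self]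
  rw [← mul_div_mul_right _ _ hx, map_div₀, hneg _ h₁, hneg _ h₃, neg_div_neg_eq]

theorem Fl_eq_traceAddHom {q : ℕ} (hσq : ∀ z, σ z = z ^ q) (l x y : F) :
    Fl q l x y = σ x * x + traceAddHom σ y + traceAddHom σ (l * x) := by
  simp only [Fl, traceAddHom_apply, hσq, mul_pow]
  ring

theorem map_map_eq_self_of_card_eq_sq [Fintype F] {q : ℕ} (hF : Fintype.card F = q ^ 2)
    (hσq : ∀ z, σ z = z ^ q) (z : F) : σ (σ z) = z := by
  rw [hσq, hσq, ← pow_mul, ← sq, ← hF, FiniteField.pow_card]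

theorem card_ker_traceAddHom_eq_and_card_eq_and_range_eq [Fintype F] {q : ℕ} {K : Subfield F}
    (hq : 2 ≤ q) (hF : Fintype.card F = q ^ 2) (hσq : ∀ z, σ z = z ^ q)
    (hK : ∀ z, z ∈ K ↔ σ z = z) :
    Nat.card (traceAddHom σ).ker = q ∧ Nat.card K = q ∧
      (traceAddHom σ).range = K.toAddSubgroup := by
  -- `X ^ q + X` and `X ^ q - X` have at most `q` roots while `|ker| * |range| = q ^ 2`,
  -- so every bound is tight.
  have hσ := map_map_eq_self_of_card_eq_sq hF hσq
  have hker : Nat.card (traceAddHom σ).ker ≤ q := by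
    rw [← SetLike.coe_sort_coe, Nat.card_coe_set_eq]
    exact ncard_le_of_forall_pow_add_mul_eq_zero hq 1 fun z hz => by simpa [hσq] using hz
  have hKle : Nat.card K ≤ q := by
    rw [← SetLike.coe_sort_coe, Nat.card_coe_set_eq]
    exact ncard_le_of_forall_pow_add_mul_eq_zero hq (-1) fun z hz => by
      simp [← hσq, (hK z).1 hz]
  have hle : (traceAddHom σ).range ≤ K.toAddSubgroup := by
    rintro _ ⟨z, rfl⟩
    exact (hK _).2 (map_traceAddHom hσ z)
  have hrange : Nat.card (traceAddHom σ).range ≤ Nat.card K := AddSubgroup.card_le_of_le hle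
  have hmul : Nat.card (traceAddHom σ).ker * Nat.card (traceAddHom σ).range = q * q := by
    rw [← AddSubgroup.index_ker, AddSubgroup.card_mul_index, Nat.card_eq_fintype_card, hF, sq]
  have hkerq : Nat.card (traceAddHom σ).ker = q :=
    le_antisymm hker <| Nat.le_of_mul_le_mul_right
      (hmul ▸ Nat.mul_le_mul_left _ (hrange.trans hKle)) (by omega)
  have hrangeq : Nat.card (traceAddHom σ).range = q :=
    Nat.eq_of_mul_eq_mul_left (by omega : 0 < q) (hkerq ▸ hmul)
  exact ⟨hkerq, by omega,
    AddSubgroup.eq_of_le_of_card_ge hle (show Nat.card K ≤ _ by omega)⟩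

end Trace

section TraceCode

variable {F : Type*} [Field F] {σ : F →+* F} {K : Subfield F} {Λ : Finset F}

def traceCode (hσ : ∀ z, σ (σ z) = z) (hK : ∀ z, z ∈ K ↔ σ z = z) (Λ : Finset F) :
    F × K →ₗ[K] (Λ → K) where
  toFun p l := ⟨traceAddHom σ (l * p.1) + p.2, (hK _).2 <| by
    rw [map_add, map_traceAddHom hσ, (hK _).1 p.2.2]⟩
  map_add' p p' := by
    ext l
    simp only [Prod.fst_add, Prod.snd_add, mul_add, map_add, Pi.add_apply, Subfield.coe_add]
    ring
  map_smul' k p := by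
    ext l
    simp only [Prod.smul_fst, Prod.smul_snd, Pi.smul_apply, RingHom.id_apply, Subfield.coe_mul,
      smul_eq_mul, Subfield.smul_def, mul_left_comm (l : F),
      traceAddHom_mul_of_map_eq ((hK k).1 k.2)]
    ring

variable (hσ : ∀ z, σ (σ z) = z) (hK : ∀ z, z ∈ K ↔ σ z = z)

@[simp] theorem traceCode_apply (p : F × K) (l : Λ) :
    (traceCode hσ hK Λ p l : F) = traceAddHom σ (l * p.1) + p.2 := rfl

theorem coe_range_traceCode {S : Set F} (hsurj : ∀ k ∈ K, ∃ z, traceAddHom σ z = k)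
    (hS : ∀ z, ∃ s ∈ S, traceAddHom σ s = traceAddHom σ z) :
    (LinearMap.range (traceCode hσ hK Λ) : Set (Λ → K)) = {c | ∃ x y, y ∈ S ∧
      ∀ l : Λ, (c l : F) = σ x * x + traceAddHom σ y + traceAddHom σ (l * x)} := by
  have hN : ∀ x, σ x * x ∈ K := fun x => (hK _).2 (by rw [map_mul, hσ, mul_comm])
  ext c
  constructor
  · rintro ⟨⟨x, a⟩, rfl⟩
    obtain ⟨z, hz⟩ := hsurj _ (sub_mem a.2 (hN x))
    obtain ⟨y, hy, hyz⟩ := hS z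
    exact ⟨x, y, hy, fun l => by rw [traceCode_apply, hyz, hz]; ring⟩
  · rintro ⟨x, y, -, hc⟩
    have hTr : traceAddHom σ y ∈ K := (hK _).2 (map_traceAddHom hσ y)
    refine ⟨(x, ⟨_, add_mem (hN x) hTr⟩), funext fun l => Subtype.ext ?_⟩
    rw [traceCode_apply, hc]
    ring

/-- No three points of `Λ` are collinear in `F` viewed as an affine plane over the fixed field
of `σ`. -/
def IsArc (σ : F →+* F) (Λ : Finset F) : Prop :=
  ∀ α ∈ Λ, ∀ β ∈ Λ, ∀ γ ∈ Λ, α ≠ β → α ≠ γ → β ≠ γ → σ ((α - β) / (γ - β)) ≠ (α - β) / (γ - β)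

theorem isArc_of_pow_sub_one_ne_one {q : ℕ} (hq : q ≠ 0) (hσq : ∀ z, σ z = z ^ q)
    (harc : ∀ α ∈ Λ, ∀ β ∈ Λ, ∀ γ ∈ Λ, α ≠ β → α ≠ γ → β ≠ γ →
      ((α - β) / (γ - β)) ^ (q - 1) ≠ 1) : IsArc σ Λ :=
  fun α hα β hβ γ hγ hαβ hαγ hβγ h => harc α hα β hβ γ hγ hαβ hαγ hβγ <|
    pow_pred_eq_one_of_pow_eq_self hq (div_ne_zero (sub_ne_zero.2 hαβ) (sub_ne_zero.2 hβγ.symm))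
      (hσq _ ▸ h)

section Weight

variable [DecidableEq F]

theorem card_filter_traceCode_eq_zero_le_two (hΛ : IsArc σ Λ) {p : F × K} (hx : p.1 ≠ 0) :
    #{l | traceCode hσ hK Λ p l = 0} ≤ 2 := by
  by_contra! h
  obtain ⟨l₁, h₁, l₂, h₂, l₃, h₃, h₁₂, h₁₃, h₂₃⟩ := two_lt_card.1 h
  simp only [mem_filter, mem_univ, true_and, ← Subtype.coe_inj (b := (0 : K)),
    traceCode_apply, ZeroMemClass.coe_zero] at h₁ h₂ h₃
  exact hΛ l₁ l₁.2 l₂ l₂.2 l₃ l₃.2 (Subtype.coe_ne_coe.2 h₁₂) (Subtype.coe_ne_coe.2 h₁₃)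
    (Subtype.coe_ne_coe.2 h₂₃) <| map_div_sub_eq_of_traceAddHom_mul_eq hx
      (by linear_combination h₁ - h₂) (by linear_combination h₃ - h₂)

theorem card_sub_two_le_hammingNorm_traceCode (hΛ : IsArc σ Λ) {p : F × K}
    (hp : traceCode hσ hK Λ p ≠ 0) : #Λ - 2 ≤ hammingNorm (traceCode hσ hK Λ p) := by
  have hsum := hammingNorm_add_card_filter_eq_zero (traceCode hσ hK Λ p)
  rw [Fintype.card_coe] at hsum
  by_cases hx : p.1 = 0
  · have hzero : #{l | traceCode hσ hK Λ p l = 0} = 0 := by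
      refine card_eq_zero.2 (filter_eq_empty_iff.2 fun l _ hl => hp (funext fun l' => ?_))
      simp only [Subtype.ext_iff, traceCode_apply, hx, mul_zero, map_zero, zero_add,
        ZeroMemClass.coe_zero, Pi.zero_apply] at hl ⊢
      exact hl
    omega
  · have := card_filter_traceCode_eq_zero_le_two hσ hK hΛ hx
    omega

theorem exists_hammingNorm_traceCode_eq (hΛ : IsArc σ Λ) (h3 : 3 ≤ #Λ) {t : F} (ht₀ : t ≠ 0)
    (ht : traceAddHom σ t = 0) :
    ∃ p, traceCode hσ hK Λ p ≠ 0 ∧ hammingNorm (traceCode hσ hK Λ p) = #Λ - 2 := by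
  obtain ⟨l₁, hl₁, l₂, hl₂, h₁₂⟩ := one_lt_card.1 (by omega : 1 < #Λ)
  set x := t / (l₁ - l₂)
  have hx : x ≠ 0 := div_ne_zero ht₀ (sub_ne_zero.2 h₁₂)
  have ha : σ (-traceAddHom σ (l₂ * x)) = -traceAddHom σ (l₂ * x) := by
    rw [map_neg, map_traceAddHom hσ]
  set p : F × K := (x, ⟨_, (hK _).2 ha⟩)
  have h₁ : traceAddHom σ (l₁ * x) = traceAddHom σ (l₂ * x) := by
    rw [← sub_eq_zero, ← map_sub, ← sub_mul, mul_div_cancel₀ _ (sub_ne_zero.2 h₁₂), ht]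
  have hzero : ({⟨l₁, hl₁⟩, ⟨l₂, hl₂⟩} : Finset Λ) ⊆
      ({l | traceCode hσ hK Λ p l = 0} : Finset Λ) := by
    intro l hl
    simp only [mem_insert, mem_singleton] at hl
    simp only [mem_filter, mem_univ, true_and, Subtype.ext_iff, traceCode_apply,
      ZeroMemClass.coe_zero, p]
    rcases hl with rfl | rfl
    · rw [h₁, add_neg_cancel]
    · rw [add_neg_cancel]
  have h2 : 2 ≤ #{l | traceCode hσ hK Λ p l = 0} :=
    calc 2 = #({⟨l₁, hl₁⟩, ⟨l₂, hl₂⟩} : Finset Λ) := (card_pair (by simpa using h₁₂)).symm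
      _ ≤ _ := card_le_card hzero
  have hle := card_filter_traceCode_eq_zero_le_two hσ hK hΛ (p := p) hx
  have hsum := hammingNorm_add_card_filter_eq_zero (traceCode hσ hK Λ p)
  rw [Fintype.card_coe] at hsum
  exact ⟨p, hammingNorm_pos_iff.1 (by omega), by omega⟩

end Weight

theorem traceCode_injective (hΛ : IsArc σ Λ) (h3 : 3 ≤ #Λ) :
    Function.Injective (traceCode hσ hK Λ) := by
  classical
  refine (injective_iff_map_eq_zero _).2 fun ⟨x, a⟩ h0 => ?_
  obtain rfl : x = 0 := by
    by_contra hx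
    have := card_filter_traceCode_eq_zero_le_two hσ hK hΛ (p := (x, a)) hx
    simp only [h0, Pi.zero_apply, filter_true, card_univ, Fintype.card_coe] at this
    omega
  obtain ⟨l, hl⟩ := card_pos.1 (by omega : 0 < #Λ)
  have := congrArg (fun c => (c ⟨l, hl⟩ : F)) h0
  simp only [traceCode_apply, mul_zero, map_zero, zero_add, Pi.zero_apply,
    ZeroMemClass.coe_zero] at this
  simp [Subtype.ext_iff, this]

theorem finrank_range_traceCode [Finite F] (hΛ : IsArc σ Λ) (h3 : 3 ≤ #Λ) :
    Module.finrank K (LinearMap.range (traceCode hσ hK Λ)) = Module.finrank K F + 1 := by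
  rw [LinearMap.finrank_range_of_inj (traceCode_injective hσ hK hΛ h3), Module.finrank_prod,
    Module.finrank_self]

end TraceCode

open Classical in
/-- The code `C` constructed from the Hermitian forms `F_λ`, `λ ∈ Λ`, evaluated on
`Ω = GF(q^2) × S`, is a `q`-ary linear `[N, 3, N-2]` MDS code: a `3`-dimensional
`GF(q)`-subspace of `GF(q)^N` in which every nonzero word has Hamming weight at least
`N - 2`, with a nonzero word of weight exactly `N - 2 = N - 3 + 1`. -/
theorem code_is_MDS (q : ℕ) (hq : IsPrimePow q)
    (F : Type) [Field F] [Fintype F] (hF : Fintype.card F = q ^ 2)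
    (K : Subfield F) (hK : ∀ x : F, x ∈ K ↔ x ^ q = x)
    (S : Set F) (hS : ∀ z : F, ∃! s : F, s ∈ S ∧ (z - s) ^ q + (z - s) = 0)
    (Λ : Finset F) (hΛ : 3 ≤ Λ.card)
    (harc : ∀ α ∈ Λ, ∀ β ∈ Λ, ∀ γ ∈ Λ, α ≠ β → α ≠ γ → β ≠ γ →
      ((α - β) / (γ - β)) ^ (q - 1) ≠ 1) :
    ∃ V : Submodule ↥K ({l : F // l ∈ Λ} → ↥K),
      (V : Set ({l : F // l ∈ Λ} → ↥K)) =
        {c | ∃ x y : F, y ∈ S ∧ ∀ l : {l : F // l ∈ Λ}, (c l : F) = Fl q l.1 x y} ∧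
      Module.finrank ↥K ↥V = 3 ∧
      (∀ c ∈ V, c ≠ 0 →
        Λ.card - 2 ≤ (Finset.univ.filter fun l : {l : F // l ∈ Λ} => c l ≠ 0).card) ∧
      (∃ c ∈ V, c ≠ 0 ∧
        (Finset.univ.filter fun l : {l : F // l ∈ Λ} => c l ≠ 0).card = Λ.card - 2) := by
  obtain ⟨σ, hσq⟩ := exists_ringHom_eq_pow hq hF
  have hσ := map_map_eq_self_of_card_eq_sq hF hσq
  have hKσ : ∀ z, z ∈ K ↔ σ z = z := by simpa only [← hσq] using hK
  have hΛσ := isArc_of_pow_sub_one_ne_one hq.pos.ne' hσq harc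
  have hSσ : ∀ z, ∃ s ∈ S, traceAddHom σ s = traceAddHom σ z := fun z => by
    obtain ⟨s, ⟨hs, hzs⟩, -⟩ := hS z
    refine ⟨s, hs, (sub_eq_zero.1 ?_).symm⟩
    rw [← map_sub]
    simpa only [traceAddHom_apply, hσq] using hzs
  obtain ⟨hker, hKq, hrange⟩ :=
    card_ker_traceAddHom_eq_and_card_eq_and_range_eq hq.two_le hF hσq hKσ
  have : Nontrivial (traceAddHom σ).ker := Finite.one_lt_card_iff_nontrivial.1 (hker ▸ hq.one_lt)
  obtain ⟨⟨t, ht⟩, ht₀⟩ := exists_ne (0 : (traceAddHom σ).ker)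
  have hfinrank : Module.finrank K F = 2 := Nat.pow_right_injective hq.two_le <| by
    show q ^ _ = q ^ 2
    rw [← hF, Module.card_eq_pow_finrank (K := K), Fintype.card_eq_nat_card, hKq]
  have hnorm (c : Λ → K) : #{l | c l ≠ 0} = hammingNorm c := by rw [hammingNorm]
  refine ⟨LinearMap.range (traceCode hσ hKσ Λ), ?_, ?_, ?_, ?_⟩
  · rw [coe_range_traceCode hσ hKσ (fun k hk => AddMonoidHom.mem_range.1 (hrange ▸ hk)) hSσ]
    simp only [Fl_eq_traceAddHom hσq]
  · rw [finrank_range_traceCode hσ hKσ hΛσ hΛ, hfinrank]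
  · rintro _ ⟨p, rfl⟩ hp
    exact (hnorm _).symm ▸ card_sub_two_le_hammingNorm_traceCode hσ hKσ hΛσ hp
  · obtain ⟨p, hp, hw⟩ := exists_hammingNorm_traceCode_eq hσ hKσ hΛσ hΛ
      (Subtype.coe_ne_coe.2 ht₀) ht
    exact ⟨_, ⟨p, rfl⟩, hp, (hnorm _).trans hw⟩
end

section
/- Let q be a prime power and Λ ⊆ GF(q^2) satisfy the arc condition. Then the common zero set in GF(q^2)² of all the forms F_λ(x,y) = x^{q+1} + y^q + y + λ^q x^q + λ x, as λ ranges over Λ with |Λ| ≥ 3, is exactly {(0, y) : y^q + y = 0}, a set of q points, and it meets Ω = GF(q^2) × S in the single point (0, y₀), where y₀ is the unique element of S with y₀^q + y₀ = 0. -/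
/-!
Subtracting two of the forms leaves `t^q + t` with `t = (λ - μ) x`, because `z ↦ z^q` is
additive. If `x ≠ 0`, the quotient of two such `t` satisfying `t^q = -t` is fixed by `z ↦ z^q`,
i.e. `((α - β)/(γ - β))^(q-1) = 1`, which the arc condition rules out; hence `x = 0`, and
`F_λ(0, y) = y^q + y`. The trace kernel `{y | y^q + y = 0}` of `GF(q²)` has exactly `q` elements:
both it and the image of the trace, which lies in `{z | z^q = z}`, have at most `q` elements,
and their sizes multiply to `q²`.
-/

open Polynomial in
lemma card_pow_add_mul_eq_zero_le {F : Type*} [Field F] {q : ℕ} (hq : 1 < q) (c : F) :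
    Nat.card {y : F // y ^ q + c * y = 0} ≤ q := by
  have hdeg : (C c * X : F[X]).degree < q :=
    (degree_C_mul_X_le c).trans_lt (by exact_mod_cast hq)
  have hmonic : (X ^ q + C c * X : F[X]).Monic := monic_X_pow_add hdeg
  have hset : {y : F | y ^ q + c * y = 0} = (X ^ q + C c * X : F[X]).rootSet F := by
    ext y
    simp [mem_rootSet, hmonic.ne_zero]
  calc Nat.card {y : F // y ^ q + c * y = 0} = {y : F | y ^ q + c * y = 0}.ncard :=
        Nat.card_coe_set_eq _
    _ ≤ (X ^ q + C c * X : F[X]).natDegree := hset ▸ ncard_rootSet_le _ F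
    _ = q := by rw [natDegree_add_eq_left_of_degree_lt (by simpa using hdeg), natDegree_X_pow]

lemma Fl_zero_left {F : Type*} [Field F] {q : ℕ} (hq : q ≠ 0) (l y : F) :
    Fl q l 0 y = y ^ q + y := by
  simp [Fl, hq]

lemma div_pow_sub_one_eq_one_of_pow_eq_neg {F : Type*} [Field F] {q : ℕ} (hq : q ≠ 0)
    {a b : F} (ha : a ≠ 0) (hb : b ≠ 0) (ha' : a ^ q = -a) (hb' : b ^ q = -b) :
    (a / b) ^ (q - 1) = 1 := by
  have hfix : (a / b) ^ q = a / b := by rw [div_pow, ha', hb', neg_div_neg_eq]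
  rw [pow_sub₀ _ (div_ne_zero ha hb) (Nat.one_le_iff_ne_zero.mpr hq), pow_one, hfix,
    mul_inv_cancel₀ (div_ne_zero ha hb)]

section Frobenius

variable {F : Type*} [Field F] (p k : ℕ) [ExpChar F p]

lemma sub_pow_expChar_pow_add_sub (z s : F) :
    (z - s) ^ p ^ k + (z - s) = (z ^ p ^ k + z) - (s ^ p ^ k + s) := by
  rw [sub_pow_expChar_pow]; ring

lemma Fl_sub_Fl (l m x y : F) :
    Fl (p ^ k) l x y - Fl (p ^ k) m x y = ((l - m) * x) ^ p ^ k + (l - m) * x := by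
  rw [mul_pow, sub_pow_expChar_pow]; unfold Fl; ring

lemma eq_zero_of_Fl_eq_zero {α β γ x y : F} (hαβ : α ≠ β) (hγβ : γ ≠ β)
    (harc : ((α - β) / (γ - β)) ^ (p ^ k - 1) ≠ 1) (hα : Fl (p ^ k) α x y = 0)
    (hβ : Fl (p ^ k) β x y = 0) (hγ : Fl (p ^ k) γ x y = 0) : x = 0 := by
  by_contra hx
  have hq : p ^ k ≠ 0 := pow_ne_zero _ (expChar_pos F p).ne'
  have hneg : ∀ l, Fl (p ^ k) l x y = 0 → ((l - β) * x) ^ p ^ k = -((l - β) * x) := by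
    intro l hl
    have := Fl_sub_Fl p k l β x y
    rw [hl, hβ] at this
    linear_combination -this
  refine harc ?_
  rw [← mul_div_mul_right _ _ hx]
  exact div_pow_sub_one_eq_one_of_pow_eq_neg hq (mul_ne_zero (sub_ne_zero.2 hαβ) hx)
    (mul_ne_zero (sub_ne_zero.2 hγβ) hx) (hneg α hα) (hneg γ hγ)

lemma forall_Fl_eq_zero_iff {Λ : Finset F} (hΛ : 3 ≤ Λ.card)
    (harc : ∀ α ∈ Λ, ∀ β ∈ Λ, ∀ γ ∈ Λ, α ≠ β → α ≠ γ → β ≠ γ →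
      ((α - β) / (γ - β)) ^ (p ^ k - 1) ≠ 1) (x y : F) :
    (∀ l ∈ Λ, Fl (p ^ k) l x y = 0) ↔ x = 0 ∧ y ^ p ^ k + y = 0 := by
  have hq : p ^ k ≠ 0 := pow_ne_zero _ (expChar_pos F p).ne'
  constructor
  · intro h
    obtain ⟨α, β, γ, hα, hβ, hγ, hαβ, hαγ, hβγ⟩ := Finset.two_lt_card_iff.mp hΛ
    obtain rfl : x = 0 := eq_zero_of_Fl_eq_zero p k hαβ hβγ.symm
      (harc α hα β hβ γ hγ hαβ hαγ hβγ) (h α hα) (h β hβ) (h γ hγ)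
    exact ⟨rfl, Fl_zero_left hq α y ▸ h α hα⟩
  · rintro ⟨rfl, hy⟩ l _
    rw [Fl_zero_left hq, hy]

lemma card_pow_add_self_eq_zero [Fintype F] (hF : Fintype.card F = (p ^ k) ^ 2) :
    Nat.card {y : F // y ^ p ^ k + y = 0} = p ^ k := by
  have hq : 1 < p ^ k := lt_of_pow_lt_pow_left₀ 2 (Nat.zero_le _)
    (by rw [one_pow, ← hF]; exact Fintype.one_lt_card)
  let φ : F →+ F := (iterateFrobenius F p k).toAddMonoidHom + AddMonoidHom.id F
  have hφ : ∀ y, φ y = y ^ p ^ k + y := fun y => by simp [φ, iterateFrobenius_def]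
  have hker : Nat.card φ.ker = Nat.card {y : F // y ^ p ^ k + y = 0} :=
    Nat.card_congr (Equiv.subtypeEquivRight fun y => by rw [AddMonoidHom.mem_ker, hφ])
  have hker_le : Nat.card {y : F // y ^ p ^ k + y = 0} ≤ p ^ k := by
    simpa using card_pow_add_mul_eq_zero_le hq (1 : F)
  have hrange_le : Nat.card φ.range ≤ p ^ k := by
    have hfix : ∀ z ∈ φ.range, z ^ p ^ k + (-1) * z = 0 := by
      rintro _ ⟨y, rfl⟩
      have hyq : y ^ (p ^ k * p ^ k) = y := by rw [← sq, ← hF]; exact FiniteField.pow_card y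
      rw [hφ, add_pow_expChar_pow, ← pow_mul, hyq]
      ring
    calc Nat.card φ.range ≤ Nat.card {z : F // z ^ p ^ k + (-1) * z = 0} :=
          Nat.card_le_card_of_injective (fun z => ⟨z, hfix z z.2⟩)
            fun a b h => Subtype.ext (by simpa using h)
      _ ≤ p ^ k := card_pow_add_mul_eq_zero_le hq (-1)
  have hprod : Nat.card φ.ker * Nat.card φ.range = p ^ k * p ^ k := by
    rw [← AddSubgroup.index_ker, AddSubgroup.card_mul_index, Nat.card_eq_fintype_card, hF, sq]
  rw [hker] at hprod
  nlinarith

end Frobenius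

/-- The common zero set of all `F_λ`, `λ ∈ Λ` (with `|Λ| ≥ 3`), is exactly
`{(0,y) : y^q + y = 0}`, a set of `q` points, and it meets `Ω = GF(q^2) × S` in a single
point `(0, y₀)` where `y₀` is the unique element of `S` of zero trace. -/
theorem common_zero_set (q : ℕ) (hq : IsPrimePow q)
    (F : Type) [Field F] [Fintype F] (hF : Fintype.card F = q ^ 2)
    (S : Set F) (hS : ∀ z : F, ∃! s : F, s ∈ S ∧ (z - s) ^ q + (z - s) = 0)
    (Λ : Finset F) (hΛ : 3 ≤ Λ.card)
    (harc : ∀ α ∈ Λ, ∀ β ∈ Λ, ∀ γ ∈ Λ, α ≠ β → α ≠ γ → β ≠ γ →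
      ((α - β) / (γ - β)) ^ (q - 1) ≠ 1) :
    (∀ x y : F, (∀ l ∈ Λ, Fl q l x y = 0) ↔ (x = 0 ∧ y ^ q + y = 0)) ∧
    Nat.card {y : F // y ^ q + y = 0} = q ∧
    (∃! p : F × F, p.2 ∈ S ∧ ∀ l ∈ Λ, Fl q l p.1 p.2 = 0) := by
  obtain ⟨p, k, hp, -, rfl⟩ := hq
  have := Fact.mk hp.nat_prime
  have : CharP F p := charP_of_card_eq_prime_pow (hF.trans (pow_mul p k 2).symm)
  have hzeros := forall_Fl_eq_zero_iff p k hΛ harc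
  have htrace : ∀ s : F, (0 - s) ^ p ^ k + (0 - s) = 0 ↔ s ^ p ^ k + s = 0 := fun s => by
    rw [sub_pow_expChar_pow_add_sub, zero_pow (pow_ne_zero _ hp.ne_zero), add_zero,
      zero_sub, neg_eq_zero]
  refine ⟨hzeros, card_pow_add_self_eq_zero p k hF, ?_⟩
  obtain ⟨s₀, ⟨hs₀S, hs₀⟩, huniq⟩ := hS 0
  refine ⟨(0, s₀), ⟨hs₀S, (hzeros 0 s₀).2 ⟨rfl, (htrace s₀).1 hs₀⟩⟩, ?_⟩
  rintro ⟨x, y⟩ ⟨hyS, hxy⟩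
  obtain ⟨rfl, hy⟩ := (hzeros x y).1 hxy
  rw [huniq y ⟨hyS, (htrace y).2 hy⟩]
end
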